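/- Assume r ≥ 2. For every integer k with 1 ≤ k ≤ r-1, the element w_k = (r_1 r_2 ⋯ r_{k-1}) · (r_k r_{k-1} ⋯ r_1) · r_0 · (r_1 r_2 ⋯ r_{k-1}) · (r_k r_{k-1} ⋯ r_1) of W commutes with s_0 (for k = 1 this element is r_1 r_0 r_1). -/

import Mathlib

noncomputable section

open CoxeterSystem
open Fin.NatCast

/-- The Coxeter matrix of the affine Weyl group of type `Ã_{2r}`:
vertices `0, …, 2r` arranged in a cycle mod `N = 2r+1`; `m i j = 3` if
`i - j ≡ ±1 (mod N)`, `m i j = 2` for other off-diagonal pairs. -/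
def affACoxeterMatrix (r : ℕ) : CoxeterMatrix (Fin (2 * r + 1)) where
  M i j := if i = j then 1 else if i = j + 1 ∨ j = i + 1 then 3 else 2
  isSymm := by
    apply Matrix.IsSymm.ext
    intro i j
    by_cases h : j = i
    · subst h; rfl
    · rw [if_neg h, if_neg (fun hh : i = j => h hh.symm)]
      exact if_congr or_comm rfl rfl
  diagonal i := if_pos rfl
  off_diagonal i j h := by
    rw [if_neg h]
    split <;> omega

/-- The affine Weyl group `W` of type `Ã_{2r}`, as the Coxeter group of the above matrix. -/
abbrev AffW (r : ℕ) : Type := (affACoxeterMatrix r).Group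

/-- The canonical Coxeter system on `AffW r`. -/
def affCS (r : ℕ) : CoxeterSystem (affACoxeterMatrix r) (AffW r) :=
  (affACoxeterMatrix r).toCoxeterSystem

/-- The simple reflection `s i` (index taken mod `2r+1`). -/
def sgen (r i : ℕ) : AffW r := (affCS r).simple ((i : ℕ) : Fin (2 * r + 1))

/-- The word in the simple reflections representing the generator `r_i` of the
relative Weyl group: `r_0 = s_0`, `r_i = s_i s_{2r+1-i}` for `1 ≤ i ≤ r-1`,
`r_r = s_r s_{r+1} s_r`. -/
def rword (r : ℕ) : ℕ → List (Fin (2 * r + 1)) := fun i =>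
  if i = 0 then [(0 : Fin (2 * r + 1))]
  else if i < r then [((i : ℕ) : Fin (2 * r + 1)), ((2 * r + 1 - i : ℕ) : Fin (2 * r + 1))]
  else [((r : ℕ) : Fin (2 * r + 1)), ((r + 1 : ℕ) : Fin (2 * r + 1)), ((r : ℕ) : Fin (2 * r + 1))]

/-- The element `r_i` of `W`. -/
def rgen (r i : ℕ) : AffW r := (affCS r).wordProd (rword r i)

/-- The list `[a, a+1, …, b]` (empty if `b < a`). -/
def ascSeq (a b : ℕ) : List ℕ := List.range' a (b + 1 - a)

/-- The list `[b, b-1, …, a]` (empty if `b < a`). -/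
def descSeq (a b : ℕ) : List ℕ := (List.range' a (b + 1 - a)).reverse

/-- The expansion, as a word in the simple reflections, of the block
`r_0 r_1 ⋯ r_{r-1} r_r r_{r-1} ⋯ r_k`. -/
def blockWord (r k : ℕ) : List (Fin (2 * r + 1)) :=
  ((ascSeq 0 r ++ descSeq k (r - 1)).map (rword r)).flatten

/-- The element `r_0 r_1 ⋯ r_{r-1} r_r r_{r-1} ⋯ r_k` of `W`. -/
def blockEl (r k : ℕ) : AffW r := (affCS r).wordProd (blockWord r k)

/-- The expansion, as a word in the simple reflections, of
`ϖ_k = (r_0 r_1 ⋯ r_{r-1} r_r r_{r-1} ⋯ r_k)^k`. -/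
def piWord (r k : ℕ) : List (Fin (2 * r + 1)) :=
  (List.replicate k (blockWord r k)).flatten

/-- The element `ϖ_k = (r_0 r_1 ⋯ r_{r-1} r_r r_{r-1} ⋯ r_k)^k` of `W`. -/
def piEl (r k : ℕ) : AffW r := (affCS r).wordProd (piWord r k)

/-- The expansion of the full block `r_0 r_1 ⋯ r_{r-1} r_r` as a word. -/
def fullBlockWord (r : ℕ) : List (Fin (2 * r + 1)) :=
  ((ascSeq 0 r).map (rword r)).flatten

/-- The element `r_0 r_1 ⋯ r_{r-1} r_r` of `W`. -/
def fullBlockEl (r : ℕ) : AffW r := (affCS r).wordProd (fullBlockWord r)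

/-!
Put `t = s_0`, `y_i = s_i` and `z_i = s_{2r+1-i}`. Then `t, y_1, …, y_k` and `t, z_1, …, z_k`
are two chains of type A glued at `t`, every `y_i` commutes with every `z_j` (`i, j ≥ 1`), and
`r_i = y_i z_i`. Hence `(r_1 ⋯ r_{k-1}) (r_k ⋯ r_1) = U V`, where
`U = y_1 ⋯ y_{k-1} y_k y_{k-1} ⋯ y_1` and `V` is the same word in the `z_j`. These are commuting
involutions, each braiding with `t` (they are reflections in roots adjacent to the simple root of
`t`). So `w_k = U V t V U = U t V t U`, and `t w_k t = (U t U) V (U t U) = U t (U V U) t U = w_k`.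
-/

theorem List.prod_map_mul_of_commute {ι M : Type*} [Monoid M] {f g : ι → M} :
    ∀ {l : List ι}, (∀ i ∈ l, ∀ j ∈ l, Commute (g i) (f j)) →
      (l.map fun i => f i * g i).prod = (l.map f).prod * (l.map g).prod
  | [], _ => by simp
  | a :: l, h => by
    have hg : Commute (g a) (l.map f).prod :=
      Commute.list_prod_right _ _ fun _ hx => by
        obtain ⟨j, hj, rfl⟩ := List.mem_map.mp hx
        exact h a (by simp) j (by simp [hj])
    simp only [List.map_cons, List.prod_cons]
    rw [List.prod_map_mul_of_commute fun i hi j hj => h i (by simp [hi]) j (by simp [hj]),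
      ← mul_assoc, mul_assoc (f a), hg.eq, mul_assoc, mul_assoc, mul_assoc]

theorem commute_mul_mul_mul_of_braid {G : Type*} [Group G] {t U V : G} (ht : t * t = 1)
    (hU : U * U = 1) (hUV : Commute U V) (hUt : U * t * U = t * U * t)
    (hVt : V * t * V = t * V * t) :
    Commute (U * V * t * (U * V)) t := by
  have hw : U * V * t * (U * V) = U * t * V * t * U := by
    calc U * V * t * (U * V) = U * V * t * (V * U) := by rw [hUV.eq]
    _ = U * (V * t * V) * U := by group
    _ = U * t * V * t * U := by rw [hVt]; group
  have hUVU : U * V * U = V := by rw [hUV.eq, mul_assoc, hU, mul_one]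
  have hconj : t * (U * t * V * t * U) * t = U * t * V * t * U := by
    calc t * (U * t * V * t * U) * t = (t * U * t) * V * (t * U * t) := by group
    _ = U * t * (U * V * U) * t * U := by rw [← hUt]; group
    _ = U * t * V * t * U := by rw [hUVU]
  rw [hw]
  calc U * t * V * t * U * t = t * (t * (U * t * V * t * U) * t) := by
        rw [← mul_assoc, ← mul_assoc, ht, one_mul]
  _ = t * (U * t * V * t * U) := by rw [hconj]

section TypeAChain

variable {G : Type*} [Group G]

structure IsTypeAChain (x : ℕ → G) (n : ℕ) : Prop where
  mul_self : ∀ i ≤ n, x i * x i = 1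
  braid : ∀ i, i + 1 ≤ n → x i * x (i + 1) * x i = x (i + 1) * x i * x (i + 1)
  commute : ∀ i j, i + 2 ≤ j → j ≤ n → Commute (x i) (x j)

def chainRefl (x : ℕ → G) : ℕ → ℕ → G
  | a, 0 => x a
  | a, n + 1 => x a * chainRefl x (a + 1) n * x a

variable {x : ℕ → G}

theorem chainRefl_eq_prod (x : ℕ → G) (a n : ℕ) :
    chainRefl x a n =
      ((List.range' a n).map x).prod * ((List.range' a (n + 1)).reverse.map x).prod := by
  induction n generalizing a with
  | zero => simp [chainRefl]
  | succ n ih => simp [chainRefl, ih, List.range'_succ, mul_assoc]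

theorem commute_chainRefl {g : G} {a n : ℕ}
    (h : ∀ j, a ≤ j → j ≤ a + n → Commute (x j) g) : Commute (chainRefl x a n) g := by
  induction n generalizing a with
  | zero => exact h a le_rfl (by omega)
  | succ n ih =>
    have ha := h a le_rfl (by omega)
    exact (ha.mul_left (ih fun j h₁ h₂ => h j (by omega) (by omega))).mul_left ha

namespace IsTypeAChain

variable {N : ℕ} (hx : IsTypeAChain x N)
include hx

theorem chainRefl_mul_self {a n : ℕ} (h : a + n ≤ N) :
    chainRefl x a n * chainRefl x a n = 1 := by
  induction n generalizing a with
  | zero => exact hx.mul_self a (by omega)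
  | succ n ih =>
    calc chainRefl x a (n + 1) * chainRefl x a (n + 1)
        = x a * (chainRefl x (a + 1) n * (x a * x a) * chainRefl x (a + 1) n) * x a := by
          simp only [chainRefl]; group
    _ = 1 := by
      rw [hx.mul_self a (by omega), mul_one, ih (by omega), mul_one, hx.mul_self a (by omega)]

theorem chainRefl_braid {a n : ℕ} (h : a + n + 1 ≤ N) :
    chainRefl x (a + 1) n * x a * chainRefl x (a + 1) n = x a * chainRefl x (a + 1) n * x a := by
  induction n generalizing a with
  | zero => exact (hx.braid a (by omega)).symm
  | succ n ih =>
    have hT : chainRefl x (a + 1) (n + 1) =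
        chainRefl x (a + 2) n * x (a + 1) * chainRefl x (a + 2) n :=
      (ih (a := a + 1) (by omega)).symm
    rw [hT]
    set D := chainRefl x (a + 2) n
    have hDD : D * D = 1 := hx.chainRefl_mul_self (by omega)
    have hDyD : D * x a * D = x a := by
      have hDy : Commute D (x a) :=
        commute_chainRefl fun j h₁ h₂ => (hx.commute a j (by omega) (by omega)).symm
      rw [hDy.eq, mul_assoc, hDD, mul_one]
    calc D * x (a + 1) * D * x a * (D * x (a + 1) * D)
        = D * x (a + 1) * (D * x a * D) * x (a + 1) * D := by group
    _ = D * (x (a + 1) * x a * x (a + 1)) * D := by rw [hDyD]; group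
    _ = D * (x a * x (a + 1) * x a) * D := by rw [hx.braid a (by omega)]
    _ = D * x a * (D * D) * x (a + 1) * (D * D) * x a * D := by rw [hDD]; group
    _ = (D * x a * D) * (D * x (a + 1) * D) * (D * x a * D) := by group
    _ = x a * (D * x (a + 1) * D) * x a := by rw [hDyD]

end IsTypeAChain

end TypeAChain

section TwoChains

variable {G : Type*} [Group G] {y z : ℕ → G} {m : ℕ}

theorem prod_map_mul_eq_chainRefl_mul_chainRefl
    (hyz : ∀ i j, 1 ≤ i → i ≤ m + 1 → 1 ≤ j → j ≤ m + 1 → Commute (y i) (z j)) :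
    ((List.range' 1 m).map fun i => y i * z i).prod *
        ((List.range' 1 (m + 1)).reverse.map fun i => y i * z i).prod =
      chainRefl y 1 m * chainRefl z 1 m := by
  have hasc := List.prod_map_mul_of_commute (l := List.range' 1 m) (f := y) (g := z)
    fun i hi j hj => by
      simp only [List.mem_range'_1] at hi hj
      exact (hyz j i (by omega) (by omega) (by omega) (by omega)).symm
  have hdesc := List.prod_map_mul_of_commute (l := (List.range' 1 (m + 1)).reverse)
    (f := y) (g := z) fun i hi j hj => by
      simp only [List.mem_reverse, List.mem_range'_1] at hi hj
      exact (hyz j i (by omega) (by omega) (by omega) (by omega)).symm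
  have hmid :
      Commute ((List.range' 1 m).map z).prod ((List.range' 1 (m + 1)).reverse.map y).prod :=
    Commute.list_prod_left _ _ fun a ha => Commute.list_prod_right _ _ fun b hb => by
      simp only [List.mem_map, List.mem_range'_1, List.mem_reverse] at ha hb
      obtain ⟨i, hi, rfl⟩ := ha
      obtain ⟨j, hj, rfl⟩ := hb
      exact (hyz j i (by omega) (by omega) (by omega) (by omega)).symm
  rw [hasc, hdesc, chainRefl_eq_prod, chainRefl_eq_prod, mul_assoc,
    ← mul_assoc _ _ (List.prod _), hmid.eq]
  group

theorem IsTypeAChain.commute_of_glue (hy : IsTypeAChain y (m + 1))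
    (hz : IsTypeAChain z (m + 1)) (h0 : y 0 = z 0)
    (hyz : ∀ i j, 1 ≤ i → i ≤ m + 1 → 1 ≤ j → j ≤ m + 1 → Commute (y i) (z j)) :
    let g := ((List.range' 1 m).map fun i => y i * z i).prod *
      ((List.range' 1 (m + 1)).reverse.map fun i => y i * z i).prod
    Commute (g * y 0 * g) (y 0) := by
  intro g
  have hg : g = chainRefl y 1 m * chainRefl z 1 m := prod_map_mul_eq_chainRefl_mul_chainRefl hyz
  rw [hg]
  have hUV : Commute (chainRefl y 1 m) (chainRefl z 1 m) :=
    commute_chainRefl fun i hi₁ hi₂ => (commute_chainRefl fun j hj₁ hj₂ =>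
      (hyz i j hi₁ (by omega) hj₁ (by omega)).symm).symm
  have hVt := hz.chainRefl_braid (a := 0) (n := m) (by omega)
  rw [← h0] at hVt
  exact commute_mul_mul_mul_of_braid (hy.mul_self 0 (by omega))
    (hy.chainRefl_mul_self (by omega)) hUV (hy.chainRefl_braid (a := 0) (by omega)) hVt

end TwoChains

namespace CoxeterSystem

variable {B W : Type*} [Group W] {M : CoxeterMatrix B} (cs : CoxeterSystem M W)

theorem simple_braid_of_eq_three {i j : B} (h : M i j = 3) :
    cs.simple i * cs.simple j * cs.simple i = cs.simple j * cs.simple i * cs.simple j := by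
  have := cs.wordProd_braidWord_eq j i
  rw [braidWord, braidWord, M.symmetric j i, h] at this
  simpa [alternatingWord, wordProd, mul_assoc] using this

theorem commute_simple_of_eq_two {i j : B} (h : M i j = 2) :
    Commute (cs.simple i) (cs.simple j) := by
  have := cs.wordProd_braidWord_eq j i
  rw [braidWord, braidWord, M.symmetric j i, h] at this
  simpa [alternatingWord, wordProd, Commute, SemiconjBy] using this.symm

end CoxeterSystem

theorem Fin.natCast_ne_zero_of_pos_of_lt {n d : ℕ} (hd : 0 < d) (hdn : d < n + 1) :
    (d : Fin (n + 1)) ≠ 0 := by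
  rw [Ne, Fin.natCast_eq_zero]
  exact fun h => absurd (Nat.le_of_dvd hd h) (by omega)

theorem affACoxeterMatrix_add_one {r : ℕ} (hr : 1 ≤ r) (a : Fin (2 * r + 1)) :
    (affACoxeterMatrix r).M a (a + 1) = 3 := by
  have hne : a ≠ a + 1 := fun h =>
    Fin.natCast_ne_zero_of_pos_of_lt (n := 2 * r) (d := 1) one_pos (by omega) (by simpa using h)
  simp [affACoxeterMatrix, hne]

theorem affACoxeterMatrix_add {r d : ℕ} (a : Fin (2 * r + 1)) (hd : 2 ≤ d)
    (hdr : d + 2 ≤ 2 * r + 1) : (affACoxeterMatrix r).M a (a + d) = 2 := by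
  have h0 : a ≠ a + d := fun h =>
    Fin.natCast_ne_zero_of_pos_of_lt (n := 2 * r) (d := d) (by omega) (by omega) (by simpa using h)
  have h1 : a ≠ a + d + 1 := fun h =>
    Fin.natCast_ne_zero_of_pos_of_lt (n := 2 * r) (d := d + 1) (by omega) (by omega)
      (by simpa [add_assoc] using h)
  have h2 : a + d ≠ a + 1 := fun h =>
    Fin.natCast_ne_zero_of_pos_of_lt (n := 2 * r) (d := d - 1) (by omega) (by omega) <|
      add_right_cancel (b := 1) <| by
        rw [← Nat.cast_add_one, Nat.sub_add_cancel (by omega), zero_add]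
        simpa using h
  simp [affACoxeterMatrix, h0, h1, h2]

section AffineA

variable {r : ℕ}

theorem sgen_mul_self (p : ℕ) : sgen r p * sgen r p = 1 :=
  (affCS r).simple_mul_simple_self _

theorem sgen_two_mul_add_one : sgen r (2 * r + 1) = sgen r 0 := by
  simp [sgen]

theorem sgen_braid (hr : 1 ≤ r) (p : ℕ) :
    sgen r p * sgen r (p + 1) * sgen r p = sgen r (p + 1) * sgen r p * sgen r (p + 1) := by
  simp only [sgen, Nat.cast_succ]
  exact (affCS r).simple_braid_of_eq_three (affACoxeterMatrix_add_one hr _)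

theorem sgen_commute {p q : ℕ} (h : p + 2 ≤ q) (h' : q + 1 ≤ p + 2 * r) :
    Commute (sgen r p) (sgen r q) := by
  obtain ⟨d, rfl⟩ : ∃ d, q = p + d := ⟨q - p, by omega⟩
  simp only [sgen, Nat.cast_add]
  exact (affCS r).commute_simple_of_eq_two (affACoxeterMatrix_add _ (by omega) (by omega))

theorem isTypeAChain_sgen {n : ℕ} (hn : n < 2 * r) : IsTypeAChain (sgen r) n where
  mul_self i _ := sgen_mul_self i
  braid i _ := sgen_braid (by omega) i
  commute i j hij hj := sgen_commute hij (by omega)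

theorem isTypeAChain_sgen_sub {n : ℕ} (hn : n < 2 * r) :
    IsTypeAChain (fun i => sgen r (2 * r + 1 - i)) n where
  mul_self i _ := sgen_mul_self _
  braid i hi := by
    rw [show 2 * r + 1 - i = 2 * r + 1 - (i + 1) + 1 by omega]
    exact (sgen_braid (by omega) _).symm
  commute i j hij hj := (sgen_commute (by omega) (by omega)).symm

theorem rgen_zero : rgen r 0 = sgen r 0 := by
  simp [rgen, rword, sgen]

theorem rgen_of_pos_of_lt {i : ℕ} (h₁ : 1 ≤ i) (h₂ : i < r) :
    rgen r i = sgen r i * sgen r (2 * r + 1 - i) := by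
  simp [rgen, rword, sgen, wordProd, show i ≠ 0 by omega, h₂]

end AffineA

theorem statement8_general (r k : ℕ) (hk1 : 1 ≤ k) (hk2 : k ≤ r - 1) :
    ((ascSeq 1 (k - 1)).map (rgen r)).prod * ((descSeq 1 k).map (rgen r)).prod *
        rgen r 0 * ((ascSeq 1 (k - 1)).map (rgen r)).prod * ((descSeq 1 k).map (rgen r)).prod *
        sgen r 0 =
      sgen r 0 *
        (((ascSeq 1 (k - 1)).map (rgen r)).prod * ((descSeq 1 k).map (rgen r)).prod *
          rgen r 0 * ((ascSeq 1 (k - 1)).map (rgen r)).prod *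
          ((descSeq 1 k).map (rgen r)).prod) := by
  obtain ⟨m, rfl⟩ : ∃ m, k = m + 1 := ⟨k - 1, by omega⟩
  have hasc : ascSeq 1 (m + 1 - 1) = List.range' 1 m := by simp [ascSeq]
  have hdesc : descSeq 1 (m + 1) = (List.range' 1 (m + 1)).reverse := by simp [descSeq]
  have hρ : ∀ l : List ℕ, (∀ i ∈ l, 1 ≤ i ∧ i ≤ m + 1) →
      l.map (rgen r) = l.map fun i => sgen r i * sgen r (2 * r + 1 - i) := fun l hl =>
    List.map_congr_left fun i hi => rgen_of_pos_of_lt (hl i hi).1 (by have := (hl i hi).2; omega)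
  rw [hasc, hdesc, hρ _ (fun i hi => by simp at hi; omega),
    hρ _ (fun i hi => by simp at hi; omega), rgen_zero]
  have key := IsTypeAChain.commute_of_glue (isTypeAChain_sgen (r := r) (n := m + 1) (by omega))
    (isTypeAChain_sgen_sub (by omega)) sgen_two_mul_add_one.symm
    (fun i j _ hi hj _ => sgen_commute (by omega) (by omega))
  simpa only [mul_assoc] using key.eq

/-- For `r ≥ 2` and `1 ≤ k ≤ r-1`, the element
`w_k = (r_1 r_2 ⋯ r_{k-1}) · (r_k r_{k-1} ⋯ r_1) · r_0 · (r_1 r_2 ⋯ r_{k-1}) · (r_k r_{k-1} ⋯ r_1)`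
of `W` commutes with `s_0`. -/
theorem statement8 (r k : ℕ) (hr : 2 ≤ r) (hk1 : 1 ≤ k) (hk2 : k ≤ r - 1) :
    ((ascSeq 1 (k - 1)).map (rgen r)).prod * ((descSeq 1 k).map (rgen r)).prod *
        rgen r 0 * ((ascSeq 1 (k - 1)).map (rgen r)).prod * ((descSeq 1 k).map (rgen r)).prod *
        sgen r 0 =
      sgen r 0 *
        (((ascSeq 1 (k - 1)).map (rgen r)).prod * ((descSeq 1 k).map (rgen r)).prod *
          rgen r 0 * ((ascSeq 1 (k - 1)).map (rgen r)).prod *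
          ((descSeq 1 k).map (rgen r)).prod) :=
  statement8_general r k hk1 hk2
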